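/- arXiv:1206.1105 — 9 statements merged into one kernel-verified Lean document; each statement's English description precedes it below -/
import Mathlib

section
/- Theorem 1 (closed-form solution): Γ = I + Λ − Tᵀ is invertible; writing P = Γ⁻¹ = (p_{ij}), for every nonempty S ⊆ {1,…,n} the principal submatrix P_{SS} of P indexed by S is invertible. Define ν ∈ ℝⁿ by (ν_j)_{j∈S} = P_{SS}⁻¹ e (where e is the all-ones vector indexed by S) and ν_j = 0 for j ∉ S. Then the vector f = P ν satisfies f_i = 1 for all i ∈ S and (1 + λ_j) f_j = Σ_{k=1}^n t_{kj} f_k for all j ∉ S; that is, f = P ν is the influence vector of S. -/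
open Matrix BigOperators

/-- The matrix `Γ = I + Λ − Tᵀ` of the linear influence model. -/
def circuitGamma (n : ℕ) (T : Matrix (Fin n) (Fin n) ℝ) (lam : Fin n → ℝ) :
    Matrix (Fin n) (Fin n) ℝ :=
  1 + Matrix.diagonal lam - Tᵀ

lemma circuitGamma_apply (n : ℕ) (T : Matrix (Fin n) (Fin n) ℝ) (lam : Fin n → ℝ)
    (a b : Fin n) :
    circuitGamma n T lam a b = (if a = b then 1 + lam a else 0) - T b a := by
  simp only [circuitGamma, Matrix.sub_apply, Matrix.add_apply, Matrix.one_apply,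
    Matrix.diagonal_apply, Matrix.transpose_apply]
  split_ifs <;> ring

lemma gamma_sub_det_ne_zero {n : ℕ} {T : Matrix (Fin n) (Fin n) ℝ}
    (hT : ∀ i j, 0 ≤ T i j) (hcol : ∀ i, ∑ j, T j i ≤ 1)
    {lam : Fin n → ℝ} (hlam : ∀ i, 0 < lam i)
    {m : Type*} [Fintype m] [DecidableEq m] (g : m → Fin n) (hg : Function.Injective g) :
    ((circuitGamma n T lam).submatrix g g).det ≠ 0 := by
  apply det_ne_zero_of_sum_row_lt_diag
  intro k
  have hTkk : T (g k) (g k) ≤ 1 :=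
    le_trans (Finset.single_le_sum (fun j _ => hT j (g k)) (Finset.mem_univ (g k))) (hcol (g k))
  have hdiag : (circuitGamma n T lam).submatrix g g k k = 1 + lam (g k) - T (g k) (g k) := by
    simp [Matrix.submatrix_apply, circuitGamma_apply]
  have hdpos : 0 < 1 + lam (g k) - T (g k) (g k) := by
    have := hlam (g k); linarith
  rw [hdiag, Real.norm_of_nonneg hdpos.le]
  have hoff : ∀ j ∈ Finset.univ.erase k,
      ‖(circuitGamma n T lam).submatrix g g k j‖ = T (g j) (g k) := by
    intro j hj
    have hne : g k ≠ g j := fun h => (Finset.mem_erase.1 hj).1 (hg h.symm)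
    simp [Matrix.submatrix_apply, circuitGamma_apply, hne, abs_of_nonneg (hT (g j) (g k))]
  rw [Finset.sum_congr rfl hoff]
  have h1 : ∑ j ∈ Finset.univ.erase k, T (g j) (g k)
      = ∑ j ∈ (Finset.univ.erase k).image g, T j (g k) := by
    rw [Finset.sum_image (fun a _ b _ h => hg h)]
  have h2 : (Finset.univ.erase k).image g ⊆ Finset.univ.erase (g k) := by
    intro x hx
    obtain ⟨j, hj, rfl⟩ := Finset.mem_image.1 hx
    exact Finset.mem_erase.2 ⟨fun h => (Finset.mem_erase.1 hj).1 (hg h), Finset.mem_univ _⟩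
  have h3 : ∑ j ∈ (Finset.univ.erase k).image g, T j (g k)
      ≤ ∑ j ∈ Finset.univ.erase (g k), T j (g k) :=
    Finset.sum_le_sum_of_subset_of_nonneg h2 (fun i _ _ => hT i (g k))
  have h4 : ∑ j ∈ Finset.univ.erase (g k), T j (g k)
      = (∑ j, T j (g k)) - T (g k) (g k) := Finset.sum_erase_eq_sub (Finset.mem_univ _)
  have := hcol (g k)
  have := hlam (g k)
  linarith [h1 ▸ h3, h4]


/-- The basis matrix `P = Γ⁻¹`. -/
noncomputable def circuitP (n : ℕ) (T : Matrix (Fin n) (Fin n) ℝ) (lam : Fin n → ℝ) :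
    Matrix (Fin n) (Fin n) ℝ :=
  (circuitGamma n T lam)⁻¹

/-- The principal submatrix `P_SS` of `P` indexed by a subset `S`. -/
noncomputable def circuitPSS (n : ℕ) (T : Matrix (Fin n) (Fin n) ℝ) (lam : Fin n → ℝ)
    (S : Finset (Fin n)) : Matrix {x : Fin n // x ∈ S} {x : Fin n // x ∈ S} ℝ :=
  (circuitP n T lam).submatrix (fun i => (i : Fin n)) (fun j => (j : Fin n))

/-- Theorem 1: `Γ` is invertible, the principal submatrix `P_SS` of
`P = Γ⁻¹` is invertible, and the vector `f = P ν`, with `ν` given on `S` by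
`P_SS⁻¹ e` and vanishing off `S`, is the influence vector of `S`. -/
theorem influence_closed_form (n : ℕ) (hn : 1 ≤ n)
    (T : Matrix (Fin n) (Fin n) ℝ)
    (hT : ∀ i j, 0 ≤ T i j)
    (hcol : ∀ i, ∑ j, T j i ≤ 1)
    (lam : Fin n → ℝ) (hlam : ∀ i, 0 < lam i)
    (S : Finset (Fin n)) (hS : S.Nonempty) :
    IsUnit (circuitGamma n T lam) ∧
    IsUnit (circuitPSS n T lam S) ∧
    ∀ ν : Fin n → ℝ,
      (∀ j (hj : j ∈ S),
        ν j = (circuitPSS n T lam S)⁻¹.mulVec (fun _ => (1 : ℝ)) ⟨j, hj⟩) →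
      (∀ j, j ∉ S → ν j = 0) →
      ((∀ i ∈ S, (circuitP n T lam).mulVec ν i = 1) ∧
       (∀ j, j ∉ S → (1 + lam j) * (circuitP n T lam).mulVec ν j =
          ∑ k, T k j * (circuitP n T lam).mulVec ν k)) := by
  classical
  set Γ := circuitGamma n T lam with hΓdef
  -- Γ is invertible
  have hdetΓ : Γ.det ≠ 0 := by
    have h := gamma_sub_det_ne_zero hT hcol hlam (id : Fin n → Fin n) Function.injective_id
    simpa using h
  have hΓu : IsUnit Γ := (Matrix.isUnit_iff_isUnit_det Γ).2 (isUnit_iff_ne_zero.2 hdetΓ)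
  -- block decomposition
  let e : {x : Fin n // x ∈ S} ⊕ {x : Fin n // ¬ x ∈ S} ≃ Fin n := Equiv.sumCompl (· ∈ S)
  let M : Matrix _ _ ℝ := Γ.submatrix e e
  let A := M.toBlocks₁₁
  let B := M.toBlocks₁₂
  let C := M.toBlocks₂₁
  let D := M.toBlocks₂₂
  have hM : M = Matrix.fromBlocks A B C D := (Matrix.fromBlocks_toBlocks M).symm
  have hD : D = Γ.submatrix ((↑) : {x : Fin n // ¬ x ∈ S} → Fin n) (↑) := by
    ext i j
    simp [D, M, Matrix.toBlocks₂₂, e]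
  have hdetD : D.det ≠ 0 := by
    rw [hD]; exact gamma_sub_det_ne_zero hT hcol hlam _ Subtype.coe_injective
  letI iD : Invertible D := Matrix.invertibleOfIsUnitDet D (isUnit_iff_ne_zero.2 hdetD)
  letI iΓ : Invertible Γ := Matrix.invertibleOfIsUnitDet Γ (isUnit_iff_ne_zero.2 hdetΓ)
  letI iM : Invertible M := Γ.submatrixEquivInvertible e e
  letI iM' : Invertible (Matrix.fromBlocks A B C D) := hM ▸ iM
  letI iSch : Invertible (A - B * ⅟D * C) := Matrix.invertibleOfFromBlocks₂₂Invertible A B C D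
  have hPSS : circuitPSS n T lam S = ⅟(A - B * ⅟D * C) := by
    have h1 : ⅟(Matrix.fromBlocks A B C D) =
        Matrix.fromBlocks (⅟(A - B * ⅟D * C)) (-(⅟(A - B * ⅟D * C) * B * ⅟D))
          (-(⅟D * C * ⅟(A - B * ⅟D * C))) (⅟D + ⅟D * C * ⅟(A - B * ⅟D * C) * B * ⅟D) :=
      Matrix.invOf_fromBlocks₂₂_eq A B C D
    have h2 : ⅟(Matrix.fromBlocks A B C D) = Γ⁻¹.submatrix e e := by
      rw [invOf_eq_nonsing_inv, ← hM]
      show M⁻¹ = _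
      rw [Matrix.inv_submatrix_equiv]
    ext i j
    have h3 := congrArg (fun X => X (Sum.inl i) (Sum.inl j)) (h2.symm.trans h1)
    simpa [circuitPSS, circuitP, e, Matrix.fromBlocks] using h3
  have hPSSu : IsUnit (circuitPSS n T lam S) := by
    rw [hPSS]; exact isUnit_of_invertible _
  refine ⟨hΓu, hPSSu, ?_⟩
  intro ν hν hν0
  set f := (circuitP n T lam).mulVec ν with hfdef
  have hGf : Γ.mulVec f = ν := by
    rw [hfdef, circuitP, Matrix.mulVec_mulVec, ← hΓdef,
      Matrix.mul_nonsing_inv _ (isUnit_iff_ne_zero.2 hdetΓ), Matrix.one_mulVec]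
  constructor
  · intro i hi
    have hPSSdet : IsUnit (circuitPSS n T lam S).det :=
      (Matrix.isUnit_iff_isUnit_det _).1 hPSSu
    have key : (circuitPSS n T lam S).mulVec
        ((circuitPSS n T lam S)⁻¹.mulVec (fun _ => (1:ℝ))) = fun _ => (1:ℝ) := by
      rw [Matrix.mulVec_mulVec, Matrix.mul_nonsing_inv _ hPSSdet, Matrix.one_mulVec]
    have h5 : f i = ∑ k ∈ S, circuitP n T lam i k * ν k := by
      rw [hfdef]
      show ∑ k, circuitP n T lam i k * ν k = _
      rw [← Finset.sum_subset (Finset.subset_univ S)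
        (fun k _ hk => by rw [hν0 k hk, mul_zero])]
    have h6 : ∑ k ∈ S, circuitP n T lam i k * ν k
        = (circuitPSS n T lam S).mulVec (fun k => ν k) ⟨i, hi⟩ := by
      show _ = ∑ k : {x : Fin n // x ∈ S}, circuitP n T lam i k * ν k
      rw [← Finset.sum_coe_sort S (fun k => circuitP n T lam i k * ν k)]
    have h7 : (fun (k : {x : Fin n // x ∈ S}) => ν ↑k)
        = (circuitPSS n T lam S)⁻¹.mulVec (fun _ => (1:ℝ)) := by
      funext k; exact hν k k.2
    rw [h5, h6, h7, key]
  · intro j hj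
    have h8 : Γ.mulVec f j = (1 + lam j) * f j - ∑ k, T k j * f k := by
      show ∑ k, Γ j k * f k = _
      have : ∀ k, Γ j k * f k = (if j = k then (1 + lam j) * f k else 0) - T k j * f k := by
        intro k
        rw [hΓdef, circuitGamma_apply]
        split_ifs <;> ring
      rw [Finset.sum_congr rfl (fun k _ => this k), Finset.sum_sub_distrib,
        Finset.sum_ite_eq Finset.univ j (fun k => (1 + lam j) * f k)]
      simp
    have h9 : Γ.mulVec f j = 0 := by rw [hGf]; exact hν0 j hj
    rw [h8] at h9
    linarith [h9]
end

section
/- Single-seed influence (influence matrix formula): with P = Γ⁻¹ = (p_{ij}), for every i the diagonal entry satisfies p_{ii} ≥ 1/(1 + λ_i − t_{ii}) > 0, and the influence vector of the singleton set {i} equals (1/p_{ii}) times the i-th column of P; consequently the influence from i to j is f_{i→j} = p_{ji} / p_{ii} for all j. -/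
open Matrix BigOperators

/-- single-seed influence: with `P = Γ⁻¹`, the diagonal entry satisfies
`p_ii ≥ 1/(1 + λ_i − t_ii) > 0`, and the influence vector of the singleton `{i}` equals
`(1/p_ii)` times the `i`-th column of `P`, i.e. `f_{i→j} = p_{ji}/p_{ii}` for all `j`. -/
theorem single_seed_influence (n : ℕ) (hn : 1 ≤ n)
    (T : Matrix (Fin n) (Fin n) ℝ)
    (hT : ∀ i j, 0 ≤ T i j)
    (hcol : ∀ i, ∑ j, T j i ≤ 1)
    (lam : Fin n → ℝ) (hlam : ∀ i, 0 < lam i)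
    (i : Fin n) (f : Fin n → ℝ)
    (hf1 : f i = 1)
    (hf2 : ∀ j, j ≠ i → (1 + lam j) * f j = ∑ k, T k j * f k) :
    0 < 1 / (1 + lam i - T i i) ∧
    1 / (1 + lam i - T i i) ≤ (1 + Matrix.diagonal lam - Tᵀ)⁻¹ i i ∧
    ∀ j, f j = (1 + Matrix.diagonal lam - Tᵀ)⁻¹ j i /
        (1 + Matrix.diagonal lam - Tᵀ)⁻¹ i i := by
  have : NeZero n := ⟨Nat.one_le_iff_ne_zero.mp hn⟩
  set Γ : Matrix (Fin n) (Fin n) ℝ := 1 + Matrix.diagonal lam - Tᵀ with hΓ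
  -- f ≤ 1
  have hfle : ∀ j, f j ≤ 1 := by
    obtain ⟨j, -, hj⟩ := Finset.exists_mem_eq_sup' (Finset.univ_nonempty) f
    have hmax : ∀ k, f k ≤ f j := fun k => hj ▸ Finset.le_sup' f (Finset.mem_univ k)
    intro k
    rcases eq_or_ne j i with rfl | hji
    · exact hf1 ▸ hmax k
    · exfalso
      have h1 : (1 : ℝ) ≤ f j := hf1 ▸ hmax i
      have h2 : ∑ k, T k j * f k ≤ ∑ k, T k j * f j :=
        Finset.sum_le_sum fun k _ => mul_le_mul_of_nonneg_left (hmax k) (hT k j)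
      have h3 : ∑ k, T k j * f j ≤ f j := by
        rw [← Finset.sum_mul]
        calc (∑ k, T k j) * f j ≤ 1 * f j :=
              mul_le_mul_of_nonneg_right (hcol j) (le_trans zero_le_one h1)
          _ = f j := one_mul _
      have := (hf2 j hji).le.trans (h2.trans h3)
      nlinarith [hlam j, h1]
  -- 0 ≤ f
  have hfnn : ∀ j, 0 ≤ f j := by
    obtain ⟨j, -, hj⟩ := Finset.exists_mem_eq_inf' (Finset.univ_nonempty) f
    have hmin : ∀ k, f j ≤ f k := fun k => hj ▸ Finset.inf'_le f (Finset.mem_univ k)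
    intro k
    refine le_trans ?_ (hmin k)
    by_contra hneg
    push_neg at hneg
    have hji : j ≠ i := fun h => by rw [h, hf1] at hneg; linarith
    have h2 : ∑ k, T k j * f j ≤ ∑ k, T k j * f k :=
      Finset.sum_le_sum fun k _ => mul_le_mul_of_nonneg_left (hmin k) (hT k j)
    have h3 : f j ≤ ∑ k, T k j * f j := by
      rw [← Finset.sum_mul]
      calc f j = 1 * f j := (one_mul _).symm
        _ ≤ (∑ k, T k j) * f j := mul_le_mul_of_nonpos_right (hcol j) hneg.le
    have := (h3.trans h2).trans_eq (hf2 j hji).symm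
    nlinarith [hlam j]
  -- Γ is invertible
  have hΓentry : ∀ j k, Γ j k = (if j = k then 1 + lam j else 0) - T k j := by
    intro j k
    simp [hΓ, Matrix.one_apply, Matrix.diagonal_apply, Matrix.sub_apply, Matrix.add_apply,
      Matrix.transpose_apply]
    split <;> simp_all
  have hdiagpos : ∀ k, 0 < 1 + lam k - T k k := by
    intro k
    have h1 : T k k ≤ ∑ j, T j k := Finset.single_le_sum (fun j _ => hT j k) (Finset.mem_univ k)
    have := hcol k
    have := hlam k
    linarith
  have hdet : Γ.det ≠ 0 := by
    apply det_ne_zero_of_sum_row_lt_diag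
    intro k
    have h1 : ∑ j ∈ Finset.univ.erase k, ‖Γ k j‖ = ∑ j ∈ Finset.univ.erase k, T j k := by
      refine Finset.sum_congr rfl fun j hj => ?_
      have hjk : k ≠ j := fun h => (Finset.mem_erase.mp hj).1 h.symm
      rw [hΓentry k j, if_neg hjk]
      simp [Real.norm_eq_abs, abs_of_nonpos, hT j k, abs_of_nonneg]
    have h2 : ∑ j ∈ Finset.univ.erase k, T j k = (∑ j, T j k) - T k k := by
      rw [Finset.sum_erase_eq_sub (Finset.mem_univ k)]
    have h3 : ‖Γ k k‖ = 1 + lam k - T k k := by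
      rw [hΓentry k k, if_pos rfl, Real.norm_eq_abs, abs_of_pos (hdiagpos k)]
    rw [h1, h2, h3]
    have := hcol k
    have := hlam k
    linarith
  have hunit : IsUnit Γ.det := isUnit_iff_ne_zero.mpr hdet
  -- compute Γ *ᵥ f
  set c : ℝ := (1 + lam i) - ∑ k, T k i * f k with hc
  have hmulvec : ∀ j, (Γ *ᵥ f) j = (1 + lam j) * f j - ∑ k, T k j * f k := by
    intro j
    simp only [Matrix.mulVec, dotProduct]
    rw [show ∑ k, Γ j k * f k
        = ∑ k, ((if j = k then 1 + lam j else 0) * f k - T k j * f k) by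
      refine Finset.sum_congr rfl fun k _ => by rw [hΓentry j k]; ring]
    rw [Finset.sum_sub_distrib]
    congr 1
    simp [ite_mul]
  have hΓf : Γ *ᵥ f = fun j => if j = i then c else 0 := by
    funext j
    rw [hmulvec j]
    rcases eq_or_ne j i with rfl | hji
    · rw [if_pos rfl, hf1, hc, mul_one]
    · rw [if_neg hji, hf2 j hji, sub_self]
  -- bounds on c
  have hcpos : 0 < c := by
    have h1 : ∑ k, T k i * f k ≤ ∑ k, T k i := by
      refine Finset.sum_le_sum fun k _ => ?_
      calc T k i * f k ≤ T k i * 1 := mul_le_mul_of_nonneg_left (hfle k) (hT k i)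
        _ = T k i := mul_one _
    have := hcol i
    have := hlam i
    rw [hc]; linarith
  have hcle : c ≤ 1 + lam i - T i i := by
    have h1 : T i i ≤ ∑ k, T k i * f k := by
      have : T i i * f i ≤ ∑ k, T k i * f k :=
        Finset.single_le_sum (fun k _ => mul_nonneg (hT k i) (hfnn k)) (Finset.mem_univ i)
      rwa [hf1, mul_one] at this
    rw [hc]; linarith
  -- f = c • column i of Γ⁻¹
  have hfeq : ∀ j, f j = Γ⁻¹ j i * c := by
    have h1 : Γ⁻¹ *ᵥ (Γ *ᵥ f) = f := by
      rw [Matrix.mulVec_mulVec, Matrix.nonsing_inv_mul Γ hunit, Matrix.one_mulVec]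
    intro j
    conv_lhs => rw [← h1]
    rw [hΓf]
    simp only [Matrix.mulVec, dotProduct]
    rw [Finset.sum_eq_single i (fun k _ hk => by rw [if_neg hk, mul_zero])
      (fun h => absurd (Finset.mem_univ i) h)]
    rw [if_pos rfl]
  have hpii : Γ⁻¹ i i = c⁻¹ := by
    have := hfeq i
    rw [hf1] at this
    field_simp at this ⊢
    linarith
  refine ⟨?_, ?_, ?_⟩
  · rw [one_div]
    exact inv_pos.mpr (hdiagpos i)
  · rw [hpii, one_div]
    exact inv_anti₀ hcpos hcle
  · intro j
    rw [hfeq j, hpii, div_inv_eq_mul]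
end

section
/- Lemma 1 (bound on the correction vector): let S ⊆ {1,…,n} be nonempty, and let ν ∈ ℝⁿ be the correction vector of S, i.e. (ν_j)_{j∈S} = P_{SS}⁻¹ e and ν_j = 0 for j ∉ S, where P = Γ⁻¹ and e is the all-ones vector indexed by S. Then for every j ∈ S, ν_j ≤ (1 + λ_j) − Σ_{k∈S} t_{kj}. -/
open Matrix BigOperators

section Helpers

lemma maxPrinciple {ι : Type*} [Fintype ι]
    (A : Matrix ι ι ℝ) (hoff : ∀ i j, i ≠ j → A i j ≤ 0)
    (hrow : ∀ i, 0 < ∑ j, A i j)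
    (z : ι → ℝ) (hb : ∀ i, 0 ≤ A.mulVec z i) :
    ∀ i, 0 ≤ z i := by
  by_contra hcon
  push_neg at hcon
  obtain ⟨i₀, hi₀⟩ := hcon
  obtain ⟨m, -, hm⟩ := Finset.exists_min_image Finset.univ z ⟨i₀, Finset.mem_univ _⟩
  have hzm : z m < 0 := lt_of_le_of_lt (hm i₀ (Finset.mem_univ _)) hi₀
  have key : A.mulVec z m ≤ (∑ j, A m j) * z m := by
    rw [Finset.sum_mul]
    simp only [Matrix.mulVec, dotProduct]
    apply Finset.sum_le_sum
    intro j _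
    rcases eq_or_ne j m with rfl | hne
    · exact le_rfl
    · exact mul_le_mul_of_nonpos_left (hm j (Finset.mem_univ _)) (hoff m j (Ne.symm hne))
  have hneg : (∑ j, A m j) * z m < 0 := mul_neg_of_pos_of_neg (hrow m) hzm
  linarith [hb m]

lemma injOfDom {ι : Type*} [Fintype ι]
    (A : Matrix ι ι ℝ) (hoff : ∀ i j, i ≠ j → A i j ≤ 0)
    (hrow : ∀ i, 0 < ∑ j, A i j) :
    Function.Injective A.mulVec := by
  intro x y hxy
  have h0 : A.mulVec (x - y) = 0 := by rw [Matrix.mulVec_sub, hxy, sub_self]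
  have h0' : A.mulVec (y - x) = 0 := by
    rw [Matrix.mulVec_sub, hxy, sub_self]
  have h1 := maxPrinciple A hoff hrow (x - y) (by intro i; rw [h0]; exact le_rfl)
  have h2 := maxPrinciple A hoff hrow (y - x) (by intro i; rw [h0']; exact le_rfl)
  funext i
  have := h1 i; have := h2 i
  simp only [Pi.sub_apply] at *
  linarith

end Helpers

section GammaFacts

lemma Gamma_apply (n : ℕ) (T : Matrix (Fin n) (Fin n) ℝ) (lam : Fin n → ℝ) (i j : Fin n) :
    circuitGamma n T lam i j = (if i = j then 1 + lam i else 0) - T j i := by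
  simp only [circuitGamma, Matrix.sub_apply, Matrix.add_apply, Matrix.one_apply,
    Matrix.diagonal_apply, Matrix.transpose_apply]
  split_ifs <;> ring

lemma Gamma_row_sum_eq (n : ℕ) (T : Matrix (Fin n) (Fin n) ℝ) (lam : Fin n → ℝ)
    (U : Finset (Fin n)) (k : Fin n) (hk : k ∈ U) :
    ∑ m ∈ U, circuitGamma n T lam k m = (1 + lam k) - ∑ m ∈ U, T m k := by
  simp only [Gamma_apply, Finset.sum_sub_distrib]
  congr 1
  rw [Finset.sum_ite_eq U k (fun _ => 1 + lam k), if_pos hk]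

lemma Gamma_row_sum_pos (n : ℕ) (T : Matrix (Fin n) (Fin n) ℝ) (lam : Fin n → ℝ)
    (hT : ∀ i j, 0 ≤ T i j) (hcol : ∀ i, ∑ j, T j i ≤ 1) (hlam : ∀ i, 0 < lam i)
    (U : Finset (Fin n)) (k : Fin n) (hk : k ∈ U) :
    0 < ∑ m ∈ U, circuitGamma n T lam k m := by
  rw [Gamma_row_sum_eq n T lam U k hk]
  have h1 : ∑ m ∈ U, T m k ≤ ∑ m, T m k :=
    Finset.sum_le_sum_of_subset_of_nonneg (Finset.subset_univ U) (fun i _ _ => hT i k)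
  have := hcol k
  have := hlam k
  linarith

lemma Gamma_offdiag (n : ℕ) (T : Matrix (Fin n) (Fin n) ℝ) (lam : Fin n → ℝ)
    (hT : ∀ i j, 0 ≤ T i j) (i j : Fin n) (h : i ≠ j) :
    circuitGamma n T lam i j ≤ 0 := by
  rw [Gamma_apply, if_neg h]
  have := hT j i
  linarith

end GammaFacts

/-- Lemma 1: the correction vector `ν` of a nonempty set `S`
(given on `S` by `P_SS⁻¹ e`, zero off `S`) satisfies
`ν_j ≤ (1 + λ_j) − ∑_{k∈S} t_{kj}` for every `j ∈ S`. -/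
theorem correction_vector_bound (n : ℕ) (hn : 1 ≤ n)
    (T : Matrix (Fin n) (Fin n) ℝ)
    (hT : ∀ i j, 0 ≤ T i j)
    (hcol : ∀ i, ∑ j, T j i ≤ 1)
    (lam : Fin n → ℝ) (hlam : ∀ i, 0 < lam i)
    (S : Finset (Fin n)) (hS : S.Nonempty)
    (ν : Fin n → ℝ)
    (hν1 : ∀ j (hj : j ∈ S),
      ν j = (circuitPSS n T lam S)⁻¹.mulVec (fun _ => (1 : ℝ)) ⟨j, hj⟩)
    (hν0 : ∀ j, j ∉ S → ν j = 0) :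
    ∀ j ∈ S, ν j ≤ (1 + lam j) - ∑ k ∈ S, T k j := by
  -- abbreviations
  set Γ : Matrix (Fin n) (Fin n) ℝ := circuitGamma n T lam with hΓdef
  set P : Matrix (Fin n) (Fin n) ℝ := circuitP n T lam with hPdef
  set M : Matrix {x : Fin n // x ∈ S} {x : Fin n // x ∈ S} ℝ := circuitPSS n T lam S with hMdef
  have hoff : ∀ i k, i ≠ k → Γ i k ≤ 0 := fun i k h => Gamma_offdiag n T lam hT i k h
  have hrowU : ∀ (U : Finset (Fin n)) k, k ∈ U → 0 < ∑ m ∈ U, Γ k m :=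
    fun U k hk => Gamma_row_sum_pos n T lam hT hcol hlam U k hk
  have hrow : ∀ k, 0 < ∑ m, Γ k m := fun k => hrowU Finset.univ k (Finset.mem_univ k)
  -- Γ is invertible
  have hΓunit : IsUnit Γ := Matrix.mulVec_injective_iff_isUnit.mp (injOfDom Γ hoff hrow)
  have hΓdet : IsUnit Γ.det := (Matrix.isUnit_iff_isUnit_det Γ).mp hΓunit
  have hΓP : Γ * P = 1 := by
    rw [hPdef]; exact Matrix.mul_nonsing_inv Γ hΓdet
  -- the complement submatrix of Γ
  set Acc : Matrix {x : Fin n // x ∈ Sᶜ} {x : Fin n // x ∈ Sᶜ} ℝ :=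
    Γ.submatrix (fun i => (i : Fin n)) (fun j => (j : Fin n)) with hAccdef
  have hAccoff : ∀ i k : {x : Fin n // x ∈ Sᶜ}, i ≠ k → Acc i k ≤ 0 := by
    intro i k h
    exact hoff i k (fun hh => h (Subtype.ext hh))
  have hAccrow : ∀ i : {x : Fin n // x ∈ Sᶜ}, 0 < ∑ k, Acc i k := by
    intro i
    have h1 : ∑ k : {x : Fin n // x ∈ Sᶜ}, Acc i k = ∑ m ∈ Sᶜ, Γ (i : Fin n) m :=
      Finset.sum_coe_sort (Sᶜ) (fun m => Γ (i : Fin n) m)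
    rw [h1]
    exact hrowU Sᶜ i i.2
  -- general fact: for any vector y vanishing on S, the Γ-image restricted to Sᶜ
  -- is computed by Acc
  have hAccSys : ∀ (y : Fin n → ℝ), (∀ v ∈ S, y v = 0) →
      ∀ k : {x : Fin n // x ∈ Sᶜ},
        Acc.mulVec (fun m : {x : Fin n // x ∈ Sᶜ} => y m) k = Γ.mulVec y (k : Fin n) := by
    intro y hyS k
    have h1 : Γ.mulVec y (k : Fin n) = ∑ m, Γ (k : Fin n) m * y m := rfl
    have h2 : Acc.mulVec (fun m : {x : Fin n // x ∈ Sᶜ} => y m) k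
        = ∑ m ∈ Sᶜ, Γ (k : Fin n) m * y m := by
      simp only [Matrix.mulVec, dotProduct, hAccdef, Matrix.submatrix_apply]
      exact Finset.sum_coe_sort (Sᶜ) (fun m => Γ (k : Fin n) m * y m)
    have h3 : ∑ m ∈ S, Γ (k : Fin n) m * y m = 0 :=
      Finset.sum_eq_zero (fun m hm => by rw [hyS m hm, mul_zero])
    rw [h1, h2, ← Finset.sum_add_sum_compl S (fun m => Γ (k : Fin n) m * y m), h3, zero_add]
  -- key computation: for any w : Fin n → ℝ supported on S, the S-part of P.mulVec w
  -- is M.mulVec (restriction of w)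
  have hPmul : ∀ (w : Fin n → ℝ), (∀ v, v ∉ S → w v = 0) →
      ∀ (v : Fin n) (hv : v ∈ S),
        P.mulVec w v = M.mulVec (fun k : {x : Fin n // x ∈ S} => w k) ⟨v, hv⟩ := by
    intro w hw v hv
    have h1 : P.mulVec w v = ∑ k, P v k * w k := rfl
    have h2 : M.mulVec (fun k : {x : Fin n // x ∈ S} => w k) ⟨v, hv⟩
        = ∑ k ∈ S, P v k * w k := by
      simp only [Matrix.mulVec, dotProduct, hMdef, circuitPSS, Matrix.submatrix_apply]
      exact Finset.sum_coe_sort S (fun k => P v k * w k)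
    have h3 : ∑ k ∈ Sᶜ, P v k * w k = 0 :=
      Finset.sum_eq_zero (fun k hk => by rw [hw k (Finset.mem_compl.mp hk), mul_zero])
    rw [h1, h2, ← Finset.sum_add_sum_compl S (fun k => P v k * w k), h3, add_zero]
  -- M is invertible
  have hMker : ∀ x : {v : Fin n // v ∈ S} → ℝ, M.mulVec x = 0 → x = 0 := by
    intro x hx
    set x' : Fin n → ℝ := fun k => if h : k ∈ S then x ⟨k, h⟩ else 0 with hx'
    have hx'S : ∀ v, v ∉ S → x' v = 0 := by
      intro v hv; rw [hx']; exact dif_neg hv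
    have hx'res : (fun k : {v : Fin n // v ∈ S} => x' k) = x := by
      funext k; simp only [hx', k.2, dif_pos]
    set y : Fin n → ℝ := P.mulVec x' with hy
    have hΓy : Γ.mulVec y = x' := by
      rw [hy, Matrix.mulVec_mulVec, hΓP, Matrix.one_mulVec]
    have hyS : ∀ v ∈ S, y v = 0 := by
      intro v hv
      rw [hy, hPmul x' hx'S v hv, hx'res, hx]
      rfl
    have hyC : ∀ k : {v : Fin n // v ∈ Sᶜ}, y (k : Fin n) = 0 := by
      have hsys : Acc.mulVec (fun m : {v : Fin n // v ∈ Sᶜ} => y m) = 0 := by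
        funext k
        rw [hAccSys y hyS k, hΓy]
        exact hx'S _ (Finset.mem_compl.mp k.2)
      have hinj := injOfDom Acc hAccoff hAccrow
      have h0 : Acc.mulVec (0 : {v : Fin n // v ∈ Sᶜ} → ℝ) = 0 := Matrix.mulVec_zero Acc
      have := hinj (a₁ := fun m : {v : Fin n // v ∈ Sᶜ} => y m) (a₂ := 0) (by rw [hsys, h0])
      intro k
      exact congrFun this k
    have hy0 : y = 0 := by
      funext v
      by_cases hv : v ∈ S
      · exact hyS v hv
      · exact hyC ⟨v, Finset.mem_compl.mpr hv⟩
    have hx'0 : x' = 0 := by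
      rw [← hΓy, hy0, Matrix.mulVec_zero]
    funext k
    have := congrFun hx'0 (k : Fin n)
    rw [hx'] at this
    simpa [k.2] using this
  have hMinj : Function.Injective M.mulVec := by
    intro a b hab
    have : M.mulVec (a - b) = 0 := by rw [Matrix.mulVec_sub, hab, sub_self]
    have := hMker (a - b) this
    funext i
    have := congrFun this i
    simp only [Pi.sub_apply, Pi.zero_apply] at this
    linarith
  have hMunit : IsUnit M := Matrix.mulVec_injective_iff_isUnit.mp hMinj
  have hMdet : IsUnit M.det := (Matrix.isUnit_iff_isUnit_det M).mp hMunit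
  -- the vector z = P ν
  set z : Fin n → ℝ := P.mulVec ν with hz
  have hΓz : Γ.mulVec z = ν := by
    rw [hz, Matrix.mulVec_mulVec, hΓP, Matrix.one_mulVec]
  have hνres : (fun k : {x : Fin n // x ∈ S} => ν k) = M⁻¹.mulVec (fun _ => (1 : ℝ)) := by
    funext k
    exact hν1 k k.2
  have hzS : ∀ v ∈ S, z v = 1 := by
    intro v hv
    have hνsupp : ∀ k, k ∉ S → ν k = 0 := hν0
    rw [hz, hPmul ν hνsupp v hv, hνres, Matrix.mulVec_mulVec,
      Matrix.mul_nonsing_inv M hMdet, Matrix.one_mulVec]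
  have hzC : ∀ k : {x : Fin n // x ∈ Sᶜ}, 0 ≤ z (k : Fin n) := by
    apply maxPrinciple Acc hAccoff hAccrow
    intro k
    -- decompose Γ.mulVec z at coordinate k
    have h1 : Γ.mulVec z (k : Fin n) = ∑ m, Γ (k : Fin n) m * z m := rfl
    have h2 : Acc.mulVec (fun m : {x : Fin n // x ∈ Sᶜ} => z m) k
        = ∑ m ∈ Sᶜ, Γ (k : Fin n) m * z m := by
      simp only [Matrix.mulVec, dotProduct, hAccdef, Matrix.submatrix_apply]
      exact Finset.sum_coe_sort (Sᶜ) (fun m => Γ (k : Fin n) m * z m)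
    have hsplit := Finset.sum_add_sum_compl S (fun m => Γ (k : Fin n) m * z m)
    have hνk : ν (k : Fin n) = 0 := hν0 _ (Finset.mem_compl.mp k.2)
    have hΓzk : ∑ m, Γ (k : Fin n) m * z m = 0 := by
      rw [← h1, hΓz, hνk]
    have hSpart : ∑ m ∈ S, Γ (k : Fin n) m * z m ≤ 0 := by
      apply Finset.sum_nonpos
      intro m hm
      have hkm : (k : Fin n) ≠ m := by
        intro h
        exact (Finset.mem_compl.mp k.2) (h ▸ hm)
      rw [hzS m hm, mul_one]
      exact hoff _ _ hkm
    rw [h2]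
    linarith
  -- the final bound
  intro j hj
  have h1 : ν j = ∑ m, Γ j m * z m := by rw [← hΓz]; rfl
  have hsplit := Finset.sum_add_sum_compl S (fun m => Γ j m * z m)
  have hSpart : ∑ m ∈ S, Γ j m * z m = ∑ m ∈ S, Γ j m :=
    Finset.sum_congr rfl (fun m hm => by rw [hzS m hm, mul_one])
  have hCpart : ∑ m ∈ Sᶜ, Γ j m * z m ≤ 0 := by
    apply Finset.sum_nonpos
    intro m hm
    have hjm : j ≠ m := fun h => (Finset.mem_compl.mp hm) (h ▸ hj)
    exact mul_nonpos_of_nonpos_of_nonneg (hoff j m hjm) (hzC ⟨m, hm⟩)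
  have hsum : ∑ m ∈ S, Γ j m = (1 + lam j) - ∑ m ∈ S, T m j :=
    Gamma_row_sum_eq n T lam S j hj
  have : ν j = ∑ m ∈ S, Γ j m * z m + ∑ m ∈ Sᶜ, Γ j m * z m := by
    rw [hsplit, ← h1]
  rw [this, hSpart, hsum] at *
  linarith
end

section
/- Theorem 2 (upper bound on group influence): for nonempty subsets S, T ⊆ {1,…,n}, let f be the influence vector of S and define f_{S→T} = Σ_{j∈T} f_j and p_{i→T} = Σ_{j∈T} p_{ji} where P = Γ⁻¹ = (p_{ij}). Then f_{S→T} ≤ Σ_{i∈S} ((1 + λ_i) − Σ_{k∈S} t_{ki}) · p_{i→T}. -/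
open Matrix BigOperators

private lemma aux_nonneg {n : ℕ} (hn : 1 ≤ n) (T : Matrix (Fin n) (Fin n) ℝ)
    (hT : ∀ i j, 0 ≤ T i j) (hcol : ∀ i, ∑ j, T j i ≤ 1)
    (lam : Fin n → ℝ) (hlam : ∀ i, 0 < lam i) (v : Fin n → ℝ)
    (hv : ∀ j, v j < 0 → ∑ k, T k j * v k ≤ (1 + lam j) * v j) :
    ∀ i, 0 ≤ v i := by
  have hne : Nonempty (Fin n) := ⟨⟨0, hn⟩⟩
  obtain ⟨j, hj⟩ := Finite.exists_min v
  intro i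
  by_contra hneg
  push_neg at hneg
  have hvj : v j < 0 := lt_of_le_of_lt (hj i) hneg
  have h1 : (∑ k, T k j) * v j ≤ ∑ k, T k j * v k := by
    rw [Finset.sum_mul]
    exact Finset.sum_le_sum fun k _ => mul_le_mul_of_nonneg_left (hj k) (hT k j)
  have h2 : v j ≤ (∑ k, T k j) * v j := by nlinarith [hcol j]
  have h3 := hv j hvj
  nlinarith [hlam j]

/-- Theorem 2, upper bound on group influence: if `f` is the influence
vector of a nonempty set `S`, then for every nonempty target set `𝒯`,
`f_{S→𝒯} = ∑_{j∈𝒯} f_j ≤ ∑_{i∈S} ((1+λ_i) − ∑_{k∈S} t_{ki}) · p_{i→𝒯}`,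
where `p_{i→𝒯} = ∑_{j∈𝒯} p_{ji}` and `P = Γ⁻¹`. -/
theorem group_influence_upper_bound (n : ℕ) (hn : 1 ≤ n)
    (T : Matrix (Fin n) (Fin n) ℝ)
    (hT : ∀ i j, 0 ≤ T i j)
    (hcol : ∀ i, ∑ j, T j i ≤ 1)
    (lam : Fin n → ℝ) (hlam : ∀ i, 0 < lam i)
    (S Tset : Finset (Fin n)) (hS : S.Nonempty) (hTset : Tset.Nonempty)
    (f : Fin n → ℝ)
    (hf1 : ∀ i ∈ S, f i = 1)
    (hf2 : ∀ j ∉ S, (1 + lam j) * f j = ∑ k, T k j * f k) :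
    ∑ j ∈ Tset, f j ≤
      ∑ i ∈ S, ((1 + lam i) - ∑ k ∈ S, T k i) *
        ∑ j ∈ Tset, (1 + Matrix.diagonal lam - Tᵀ)⁻¹ j i := by
  set Γ : Matrix (Fin n) (Fin n) ℝ := 1 + Matrix.diagonal lam - Tᵀ with hΓdef
  have hmul : ∀ (v : Fin n → ℝ) (j : Fin n),
      Γ.mulVec v j = (1 + lam j) * v j - ∑ k, T k j * v k := by
    intro v j
    simp only [hΓdef, Matrix.mulVec, dotProduct, Matrix.sub_apply, Matrix.add_apply,
      Matrix.one_apply, Matrix.diagonal_apply, Matrix.transpose_apply, sub_mul, add_mul,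
      ite_mul, zero_mul, one_mul, Finset.sum_sub_distrib, Finset.sum_add_distrib,
      Finset.sum_ite_eq', Finset.sum_ite_eq, Finset.mem_univ, if_true]
  -- f is nonnegative
  have hf0 : ∀ i, 0 ≤ f i := by
    apply aux_nonneg hn T hT hcol lam hlam
    intro j hj
    by_cases hjS : j ∈ S
    · rw [hf1 j hjS] at hj; linarith
    · exact le_of_eq (hf2 j hjS).symm
  -- Γ is invertible
  have hinj : Function.Injective Γ.mulVec := by
    intro v w hvw
    have key : ∀ u : Fin n → ℝ, Γ.mulVec u = 0 → ∀ i, 0 ≤ u i := by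
      intro u hu
      apply aux_nonneg hn T hT hcol lam hlam
      intro j _
      have := hmul u j
      rw [hu] at this
      simp only [Pi.zero_apply] at this
      linarith
    have hsub : Γ.mulVec (v - w) = 0 := by
      rw [Matrix.mulVec_sub, hvw, sub_self]
    have h1 := key (v - w) hsub
    have h2 := key (w - v) (by rw [Matrix.mulVec_sub, hvw, sub_self])
    funext i
    have := h1 i
    have := h2 i
    simp only [Pi.sub_apply] at *
    linarith
  have hunit : IsUnit Γ := Matrix.mulVec_injective_iff_isUnit.mp hinj
  have hGP : Γ * Γ⁻¹ = 1 := Matrix.mul_nonsing_inv _ (Matrix.isUnit_iff_isUnit_det Γ |>.mp hunit)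
  set c : Fin n → ℝ := fun i => if i ∈ S then (1 + lam i) - ∑ k ∈ S, T k i else 0 with hcdef
  set h : Fin n → ℝ := Γ⁻¹.mulVec c with hhdef
  have hΓh : Γ.mulVec h = c := by
    rw [hhdef, Matrix.mulVec_mulVec, hGP, Matrix.one_mulVec]
  -- f ≤ h pointwise
  have hfh : ∀ i, f i ≤ h i := by
    have key := aux_nonneg hn T hT hcol lam hlam (fun i => h i - f i) ?_
    · intro i; have hk : 0 ≤ h i - f i := key i; linarith
    intro j _
    show ∑ k, T k j * (h k - f k) ≤ (1 + lam j) * (h j - f j)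
    have eh := hmul h j
    rw [hΓh] at eh
    -- eh : c j = (1+lam j) * h j - ∑ k, T k j * h k
    have hgf : (1 + lam j) * f j - ∑ k, T k j * f k ≤ c j := by
      by_cases hjS : j ∈ S
      · simp only [hcdef, if_pos hjS, hf1 j hjS, mul_one]
        have : ∑ k ∈ S, T k j ≤ ∑ k, T k j * f k := by
          calc ∑ k ∈ S, T k j = ∑ k ∈ S, T k j * f k := by
                refine Finset.sum_congr rfl fun k hk => ?_
                rw [hf1 k hk, mul_one]
            _ ≤ ∑ k, T k j * f k := by
                refine Finset.sum_le_sum_of_subset_of_nonneg (Finset.subset_univ S) ?_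
                intro k _ _
                exact mul_nonneg (hT k j) (hf0 k)
        linarith
      · simp only [hcdef, if_neg hjS]
        rw [hf2 j hjS]
        simp
    have expand : ∑ k, T k j * (h k - f k) =
        (∑ k, T k j * h k) - ∑ k, T k j * f k := by
      rw [← Finset.sum_sub_distrib]
      exact Finset.sum_congr rfl fun k _ => by ring
    rw [expand]
    linarith [eh, hgf]
  calc ∑ j ∈ Tset, f j ≤ ∑ j ∈ Tset, h j := Finset.sum_le_sum fun j _ => hfh j
    _ = ∑ j ∈ Tset, ∑ i ∈ S, Γ⁻¹ j i * ((1 + lam i) - ∑ k ∈ S, T k i) := by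
        refine Finset.sum_congr rfl fun j _ => ?_
        simp only [hhdef, Matrix.mulVec, dotProduct, hcdef]
        rw [← Finset.sum_subset (Finset.subset_univ S)]
        · exact Finset.sum_congr rfl fun i hi => by rw [if_pos hi]
        · intro i _ hiS
          rw [if_neg hiS, mul_zero]
    _ = ∑ i ∈ S, ((1 + lam i) - ∑ k ∈ S, T k i) * ∑ j ∈ Tset, Γ⁻¹ j i := by
        rw [Finset.sum_comm]
        refine Finset.sum_congr rfl fun i _ => ?_
        rw [Finset.mul_sum]
        exact Finset.sum_congr rfl fun j _ => by ring
end

section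
/- Lemma 2 (elementary symmetric polynomial inequality): let p_1,…,p_n ∈ [0,1] and for k ≥ 1 let O_k(p) = Σ_{1 ≤ i_1 < i_2 < … < i_k ≤ n} p_{i_1} p_{i_2} ⋯ p_{i_k} be the k-th elementary symmetric polynomial of p_1,…,p_n. Then for every k ≥ 1, O_k(p) · O_1(p) ≥ 2 · O_{k+1}(p), and the inequality is strict whenever O_{k+1}(p) > 0. -/
open BigOperators Finset

/-- The `k`-th elementary symmetric polynomial `O_k(p)` of `p₁,…,pₙ`. -/
def esymmO (n k : ℕ) (p : Fin n → ℝ) : ℝ :=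
  ∑ s ∈ Finset.powersetCard k (Finset.univ : Finset (Fin n)), ∏ i ∈ s, p i

lemma esymmO_one (n : ℕ) (p : Fin n → ℝ) : esymmO n 1 p = ∑ i, p i := by
  rw [esymmO, Finset.powersetCard_one]
  simp

lemma swap_sum (n k : ℕ) (p : Fin n → ℝ) :
    ∑ s ∈ Finset.powersetCard k (Finset.univ : Finset (Fin n)),
      ∑ i ∈ sᶜ, ∏ j ∈ insert i s, p j
    = (k + 1 : ℝ) * esymmO n (k + 1) p := by
  have hrhs : (k + 1 : ℝ) * esymmO n (k + 1) p =
      ∑ t ∈ Finset.powersetCard (k+1) (Finset.univ : Finset (Fin n)),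
        ∑ i ∈ t, ∏ j ∈ t, p j := by
    rw [esymmO, Finset.mul_sum]
    refine Finset.sum_congr rfl fun t ht => ?_
    rw [Finset.sum_const, (Finset.mem_powersetCard.mp ht).2]
    ring
  rw [hrhs, Finset.sum_sigma', Finset.sum_sigma']
  refine Finset.sum_bij' (fun a _ => ⟨insert a.2 a.1, a.2⟩)
    (fun b _ => ⟨b.1.erase b.2, b.2⟩) ?_ ?_ ?_ ?_ ?_
  · rintro ⟨s, i⟩ h
    simp only [Finset.mem_sigma, Finset.mem_powersetCard, Finset.mem_compl] at h ⊢
    obtain ⟨⟨_, hcard⟩, hi⟩ := h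
    exact ⟨⟨Finset.subset_univ _, by rw [Finset.card_insert_of_notMem hi, hcard]⟩,
      Finset.mem_insert_self _ _⟩
  · rintro ⟨t, i⟩ h
    simp only [Finset.mem_sigma, Finset.mem_powersetCard, Finset.mem_compl] at h ⊢
    obtain ⟨⟨_, hcard⟩, hi⟩ := h
    exact ⟨⟨Finset.subset_univ _, by rw [Finset.card_erase_of_mem hi, hcard]; rfl⟩,
      Finset.notMem_erase _ _⟩
  · rintro ⟨s, i⟩ h
    simp only [Finset.mem_sigma, Finset.mem_compl] at h
    simp [Finset.erase_insert h.2]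
  · rintro ⟨t, i⟩ h
    simp only [Finset.mem_sigma] at h
    simp [Finset.insert_erase h.2]
  · rintro ⟨s, i⟩ h
    rfl

lemma esymmO_identity (n k : ℕ) (p : Fin n → ℝ) :
    esymmO n k p * esymmO n 1 p =
      (k + 1 : ℝ) * esymmO n (k + 1) p +
      ∑ s ∈ Finset.powersetCard k (Finset.univ : Finset (Fin n)),
        (∏ j ∈ s, p j) * ∑ i ∈ s, p i := by
  rw [esymmO_one, esymmO, Finset.sum_mul, ← swap_sum n k p, ← Finset.sum_add_distrib]
  refine Finset.sum_congr rfl fun s hs => ?_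
  rw [Finset.mul_sum]
  rw [← Finset.sum_add_sum_compl s (fun i => (∏ j ∈ s, p j) * p i), add_comm]
  congr 1
  · refine Finset.sum_congr rfl fun i hi => ?_
    rw [Finset.prod_insert (Finset.mem_compl.mp hi), mul_comm]
  · rw [Finset.mul_sum]

/-- Lemma 2: for `p₁,…,pₙ ∈ [0,1]` and every `k ≥ 1`,
`O_k(p) · O_1(p) ≥ 2 · O_{k+1}(p)`, strictly whenever `O_{k+1}(p) > 0`. -/
theorem esymm_mul_first_ge_two_next (n : ℕ) (p : Fin n → ℝ)
    (hp : ∀ i, 0 ≤ p i ∧ p i ≤ 1) :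
    ∀ k : ℕ, 1 ≤ k →
      2 * esymmO n (k + 1) p ≤ esymmO n k p * esymmO n 1 p ∧
      (0 < esymmO n (k + 1) p →
        2 * esymmO n (k + 1) p < esymmO n k p * esymmO n 1 p) := by
  intro k hk
  have hO : 0 ≤ esymmO n (k + 1) p :=
    Finset.sum_nonneg fun s _ => Finset.prod_nonneg fun i _ => (hp i).1
  have hR : 0 ≤ ∑ s ∈ Finset.powersetCard k (Finset.univ : Finset (Fin n)),
      (∏ j ∈ s, p j) * ∑ i ∈ s, p i :=
    Finset.sum_nonneg fun s _ => mul_nonneg (Finset.prod_nonneg fun i _ => (hp i).1)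
      (Finset.sum_nonneg fun i _ => (hp i).1)
  have hk2 : (2 : ℝ) ≤ (k + 1 : ℝ) := by
    have : (1 : ℝ) ≤ (k : ℝ) := by exact_mod_cast hk
    linarith
  rw [esymmO_identity n k p]
  constructor
  · nlinarith
  · intro hpos
    -- find t with positive product
    obtain ⟨t, ht, htp⟩ : ∃ t ∈ Finset.powersetCard (k+1) (Finset.univ : Finset (Fin n)),
        0 < ∏ j ∈ t, p j := by
      by_contra h
      push_neg at h
      have : esymmO n (k+1) p ≤ 0 := Finset.sum_nonpos fun s hs => h s hs
      linarith
    have hcard : t.card = k + 1 := (Finset.mem_powersetCard.mp ht).2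
    have htne : t.Nonempty := Finset.card_pos.mp (by omega)
    obtain ⟨i, hi⟩ := htne
    set s := t.erase i with hs
    have hscard : s.card = k := by rw [hs, Finset.card_erase_of_mem hi, hcard]; rfl
    have hsmem : s ∈ Finset.powersetCard k (Finset.univ : Finset (Fin n)) :=
      Finset.mem_powersetCard.mpr ⟨Finset.subset_univ _, hscard⟩
    have hprodpos : ∀ j ∈ t, 0 < p j := fun j hj => by
      by_contra hle
      push_neg at hle
      have hz : p j = 0 := le_antisymm hle (hp j).1
      have : ∏ j ∈ t, p j = 0 := Finset.prod_eq_zero hj hz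
      linarith
    have hsp : 0 < ∏ j ∈ s, p j :=
      Finset.prod_pos fun j hj => hprodpos j (Finset.mem_of_mem_erase hj)
    have hsne : s.Nonempty := Finset.card_pos.mp (by omega)
    obtain ⟨j0, hj0⟩ := hsne
    have hsum : 0 < ∑ i ∈ s, p i :=
      Finset.sum_pos' (fun i _ => (hp i).1)
        ⟨j0, hj0, hprodpos j0 (Finset.mem_of_mem_erase hj0)⟩
    have hRpos : 0 < ∑ s ∈ Finset.powersetCard k (Finset.univ : Finset (Fin n)),
        (∏ j ∈ s, p j) * ∑ i ∈ s, p i :=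
      Finset.sum_pos' (fun s _ => mul_nonneg (Finset.prod_nonneg fun i _ => (hp i).1)
        (Finset.sum_nonneg fun i _ => (hp i).1))
        ⟨s, hsmem, mul_pos hsp hsum⟩
    nlinarith
end

section
/- Theorem 3 (linearization of the stochastic model): let T = (t_{ij}) be an n×n real matrix with t_{ij} ≥ 0 and Σ_{j=1}^n t_{ji} ≤ 1 for every i, let S ⊆ {1,…,n}, and let f ∈ ℝⁿ with 0 ≤ f_j ≤ 1 for all j satisfy the stochastic-model fixed-point equations: f_i = 1 for i ∈ S and f_i = 1 − ∏_{j=1}^n (1 − t_{ji} f_j) for i ∉ S. Then for every i ∉ S with Σ_{j=1}^n t_{ji} f_j > 0 there exists λ_i ∈ [0,1) such that f_i = (1/(1 + λ_i)) Σ_{j=1}^n t_{ji} f_j. -/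
open Matrix BigOperators

lemma weier_lower {ι : Type*} [DecidableEq ι] (A : Finset ι) (x : ι → ℝ)
    (h0 : ∀ j ∈ A, 0 ≤ x j) (h1 : ∀ j ∈ A, x j ≤ 1) :
    1 - ∑ j ∈ A, x j ≤ ∏ j ∈ A, (1 - x j) := by
  induction A using Finset.induction_on with
  | empty => simp
  | @insert a B ha ih =>
    rw [Finset.sum_insert ha, Finset.prod_insert ha]
    have h0' : ∀ j ∈ B, 0 ≤ x j := fun j hj => h0 j (Finset.mem_insert_of_mem hj)
    have h1' : ∀ j ∈ B, x j ≤ 1 := fun j hj => h1 j (Finset.mem_insert_of_mem hj)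
    have hB := ih h0' h1'
    have hxa : x a ≤ 1 := h1 a (Finset.mem_insert_self a B)
    have hxa0 : 0 ≤ x a := h0 a (Finset.mem_insert_self a B)
    have hB0 : 0 ≤ ∑ j ∈ B, x j := Finset.sum_nonneg h0'
    have hprod0 : 0 ≤ ∏ j ∈ B, (1 - x j) :=
      Finset.prod_nonneg fun j hj => by linarith [h1' j hj]
    nlinarith

lemma weier_strict {ι : Type*} [DecidableEq ι] (A : Finset ι) (x : ι → ℝ)
    (h0 : ∀ j ∈ A, 0 ≤ x j) (h1 : ∀ j ∈ A, x j ≤ 1)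
    (hs : ∑ j ∈ A, x j ≤ 1) (hpos : 0 < ∑ j ∈ A, x j) :
    ∏ j ∈ A, (1 - x j) < 1 - (∑ j ∈ A, x j) / 2 := by
  induction A using Finset.induction_on with
  | empty => simp at hpos
  | @insert a B ha ih =>
    have hmem : ∀ j ∈ B, j ∈ insert a B := fun j hj => Finset.mem_insert_of_mem hj
    have h0' : ∀ j ∈ B, 0 ≤ x j := fun j hj => h0 j (hmem j hj)
    have h1' : ∀ j ∈ B, x j ≤ 1 := fun j hj => h1 j (hmem j hj)
    have hxa0 : 0 ≤ x a := h0 a (Finset.mem_insert_self a B)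
    have hxa1 : x a ≤ 1 := h1 a (Finset.mem_insert_self a B)
    rw [Finset.sum_insert ha] at hs hpos ⊢
    rw [Finset.prod_insert ha]
    have hB0 : 0 ≤ ∑ j ∈ B, x j := Finset.sum_nonneg h0'
    have hprod0 : 0 ≤ ∏ j ∈ B, (1 - x j) :=
      Finset.prod_nonneg fun j hj => by linarith [h1' j hj]
    have hprod1 : ∏ j ∈ B, (1 - x j) ≤ 1 :=
      Finset.prod_le_one (fun j hj => by linarith [h1' j hj])
        (fun j hj => by linarith [h0' j hj])
    rcases eq_or_lt_of_le hB0 with hB | hB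
    · -- sum over B is 0, so x a > 0
      have hxa : 0 < x a := by linarith [hB]
      rcases eq_or_lt_of_le hxa1 with h | h
      · nlinarith
      · nlinarith
    · have hBs : ∑ j ∈ B, x j ≤ 1 := by linarith
      have hIH := ih h0' h1' hBs hB
      rcases eq_or_lt_of_le hxa1 with h | h
      · rw [← h]; simp
        nlinarith
      · have : (1 - x a) * ∏ j ∈ B, (1 - x j) < (1 - x a) * (1 - (∑ j ∈ B, x j) / 2) := by
          apply mul_lt_mul_of_pos_left hIH; linarith
        nlinarith

/-- Theorem 3, linearization of the stochastic model: if `f ∈ [0,1]ⁿ`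
satisfies the stochastic-model fixed-point equations `f i = 1` for `i ∈ S` and
`f i = 1 − ∏ⱼ (1 − t_{ji} f_j)` for `i ∉ S`, then for every `i ∉ S` with
`∑ⱼ t_{ji} f_j > 0` there is a damping coefficient `λᵢ ∈ [0,1)` with
`f i = (1/(1+λᵢ)) ∑ⱼ t_{ji} f_j`. -/
theorem stochastic_model_linearization (n : ℕ)
    (T : Matrix (Fin n) (Fin n) ℝ)
    (hT : ∀ i j, 0 ≤ T i j)
    (hcol : ∀ i, ∑ j, T j i ≤ 1)
    (S : Finset (Fin n)) (f : Fin n → ℝ)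
    (hf01 : ∀ j, 0 ≤ f j ∧ f j ≤ 1)
    (hfS : ∀ i ∈ S, f i = 1)
    (hfix : ∀ i ∉ S, f i = 1 - ∏ j, (1 - T j i * f j)) :
    ∀ i ∉ S, 0 < ∑ j, T j i * f j →
      ∃ lam : ℝ, 0 ≤ lam ∧ lam < 1 ∧
        f i = (1 / (1 + lam)) * ∑ j, T j i * f j := by
  intro i hiS hpos
  set s := ∑ j, T j i * f j with hsdef
  set x : Fin n → ℝ := fun j => T j i * f j with hx
  have h0 : ∀ j ∈ (Finset.univ : Finset (Fin n)), 0 ≤ x j :=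
    fun j _ => mul_nonneg (hT j i) (hf01 j).1
  have h1 : ∀ j ∈ (Finset.univ : Finset (Fin n)), x j ≤ 1 := by
    intro j _
    have := Finset.single_le_sum (f := fun j => T j i)
      (fun j _ => hT j i) (Finset.mem_univ j)
    have h2 : T j i * f j ≤ T j i * 1 :=
      mul_le_mul_of_nonneg_left (hf01 j).2 (hT j i)
    simp only [hx]; linarith [hcol i]
  have hsle : ∑ j ∈ Finset.univ, x j ≤ 1 := by
    calc ∑ j, x j ≤ ∑ j, T j i := by
          apply Finset.sum_le_sum
          intro j _
          have := mul_le_mul_of_nonneg_left (hf01 j).2 (hT j i)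
          simpa [hx] using this
      _ ≤ 1 := hcol i
  have hlow := weier_lower Finset.univ x h0 h1
  have hstrict := weier_strict Finset.univ x h0 h1 hsle hpos
  have hfi : f i = 1 - ∏ j, (1 - x j) := hfix i hiS
  have hfi_le : f i ≤ s := by
    have : 1 - ∑ j ∈ Finset.univ, x j ≤ ∏ j, (1 - x j) := hlow
    rw [hfi]; simp only [hsdef]; linarith [this]
  have hfi_gt : s / 2 < f i := by rw [hfi]; simp only [hsdef] at hstrict ⊢; linarith
  have hfipos : 0 < f i := by linarith
  refine ⟨s / f i - 1, by
      rw [sub_nonneg, le_div_iff₀ hfipos]; linarith,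
    by
      rw [sub_lt_iff_lt_add, div_lt_iff₀ hfipos]; linarith,
    ?_⟩
  have h1lam : 1 + (s / f i - 1) = s / f i := by ring
  rw [h1lam, one_div_div, div_mul_eq_mul_div, mul_comm, ← div_mul_eq_mul_div]
  rw [div_self (by linarith : s ≠ 0), one_mul]
end

section
/- Circuit equivalence: let c_{ij} ≥ 0 (1 ≤ i,j ≤ n) be conductances with d_i = Σ_{j=1}^n c_{ji} > 0, let θ_i ∈ (0,1] and λ_i > 0 for each i, and define t_{ji} = θ_i c_{ji} / d_i. Let S ⊆ {1,…,n} and let U ∈ ℝⁿ be a potential vector with U_j = 1 for all j ∈ S. Then, for each i ∉ S, the Kirchhoff current-balance equation Σ_{j=1}^n c_{ji} (U_j − U_i) + ((1 + λ_i − θ_i) d_i / θ_i) · (0 − U_i) = 0 holds if and only if U_i = (1/(1 + λ_i)) Σ_{j=1}^n t_{ji} U_j. Consequently, the electric potentials of the circuit (unit potential on S, each non-seed node grounded through conductance (1+λ_i−θ_i) d_i / θ_i) coincide with the influence vector of S in the linear model with transmission probabilities t_{ji} and damping coefficients λ_i. -/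
open BigOperators

/-- circuit equivalence: with conductances `c_{ij} ≥ 0`,
`d_i = ∑ⱼ c_{ji} > 0`, `θᵢ ∈ (0,1]`, `λᵢ > 0` and transmission probabilities
`t_{ji} = θᵢ c_{ji} / dᵢ`, for a potential vector `U` with unit potential on the
seed set `S`, the Kirchhoff current-balance equation at a non-seed node `i`
(grounded through conductance `(1+λᵢ−θᵢ) dᵢ/θᵢ`) holds iff the linear-model
equation `Uᵢ = (1/(1+λᵢ)) ∑ⱼ t_{ji} Uⱼ` holds; consequently the circuit potentials
coincide with the influence vector of `S`. -/
theorem circuit_equivalence (n : ℕ)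
    (c : Fin n → Fin n → ℝ) (hc : ∀ i j, 0 ≤ c i j)
    (d : Fin n → ℝ) (hd : ∀ i, d i = ∑ j, c j i) (hdpos : ∀ i, 0 < d i)
    (θ : Fin n → ℝ) (hθ : ∀ i, 0 < θ i ∧ θ i ≤ 1)
    (lam : Fin n → ℝ) (hlam : ∀ i, 0 < lam i)
    (t : Fin n → Fin n → ℝ) (ht : ∀ j i, t j i = θ i * c j i / d i)
    (S : Finset (Fin n)) (U : Fin n → ℝ) (hU : ∀ j ∈ S, U j = 1) :
    (∀ i ∉ S,
      ((∑ j, c j i * (U j - U i)) +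
          ((1 + lam i - θ i) * d i / θ i) * (0 - U i) = 0 ↔
        U i = (1 / (1 + lam i)) * ∑ j, t j i * U j)) ∧
    ((∀ i ∉ S,
        (∑ j, c j i * (U j - U i)) +
          ((1 + lam i - θ i) * d i / θ i) * (0 - U i) = 0) →
      ((∀ i ∈ S, U i = 1) ∧
        ∀ i ∉ S, (1 + lam i) * U i = ∑ j, t j i * U j)) := by

  have key : ∀ i, ((∑ j, c j i * (U j - U i)) +
      ((1 + lam i - θ i) * d i / θ i) * (0 - U i) = 0 ↔
      U i = (1 / (1 + lam i)) * ∑ j, t j i * U j) := by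
    intro i
    have hθi := (hθ i).1
    have hdi := hdpos i
    have hli := hlam i
    have h1 : (1 : ℝ) + lam i ≠ 0 := by linarith
    have hts : (∑ j, t j i * U j) = θ i / d i * ∑ j, c j i * U j := by
      rw [Finset.mul_sum]
      refine Finset.sum_congr rfl fun j _ => ?_
      rw [ht]; ring
    have hsum : (∑ j, c j i * (U j - U i)) = (∑ j, c j i * U j) - d i * U i := by
      rw [hd, Finset.sum_mul]
      rw [← Finset.sum_sub_distrib]
      refine Finset.sum_congr rfl fun j _ => by ring
    rw [hsum, hts]
    constructor
    · intro h
      field_simp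
      field_simp at h
      nlinarith [h]
    · intro h
      field_simp at h ⊢
      nlinarith [h]
  refine ⟨fun i _ => key i, fun h => ⟨hU, fun i hi => ?_⟩⟩
  have h1 : (1:ℝ) + lam i ≠ 0 := by have := hlam i; linarith
  have := (key i).mp (h i hi)
  rw [this]
  field_simp
end

section
/- PageRank as an influence bound: let d ∈ (0,1), set λ = (1−d)/d > 0, and let A = (a_{ij}) be an n×n real matrix with a_{ij} ≥ 0 and Σ_{i=1}^n a_{ij} = 1 for every j (column sums equal 1). Let S ⊆ {1,…,n} be nonempty and e_S ∈ ℝⁿ its indicator vector. Then I − dA is invertible, (1+λ)I − Aᵀ is invertible with inverse P = (p_{ij}), and the unique solution x of x = d A x + ((1−d)/|S|) e_S satisfies, for every i, x_i = (λ/|S|) Σ_{j∈S} p_{ji}; that is, the topic-sensitive PageRank value of node i is proportional to p_{i→S} = Σ_{j∈S} p_{ji}, hence to the upper bound b_{i→S} = (1+λ) p_{i→S} of the influence f_{i→S}. -/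
open Matrix BigOperators

/-- PageRank as an influence bound: for `d ∈ (0,1)`, `λ = (1−d)/d`, and a
nonnegative column-stochastic matrix `A`, the matrices `I − dA` and `(1+λ)I − Aᵀ` are
invertible, and the unique solution `x` of `x = dAx + ((1−d)/|S|) e_S` satisfies
`x_i = (λ/|S|) ∑_{j∈S} p_{ji}` where `P = ((1+λ)I − Aᵀ)⁻¹`; i.e. the topic-sensitive
PageRank of node `i` is proportional to the potential `p_{i→S}`, hence to the upper
bound `b_{i→S} = (1+λ) p_{i→S}` of the influence `f_{i→S}`. -/
theorem pagerank_as_influence_bound (n : ℕ) (hn : 1 ≤ n)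
    (d : ℝ) (hd0 : 0 < d) (hd1 : d < 1)
    (lam : ℝ) (hlam : lam = (1 - d) / d)
    (A : Matrix (Fin n) (Fin n) ℝ)
    (hA : ∀ i j, 0 ≤ A i j)
    (hcolsum : ∀ j, ∑ i, A i j = 1)
    (S : Finset (Fin n)) (hS : S.Nonempty) :
    IsUnit (1 - d • A) ∧
    IsUnit ((1 + lam) • (1 : Matrix (Fin n) (Fin n) ℝ) - Aᵀ) ∧
    ∀ x : Fin n → ℝ,
      x = d • A.mulVec x +
          ((1 - d) / (S.card : ℝ)) • (fun i => if i ∈ S then (1 : ℝ) else 0) →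
      ∀ i, x i = (lam / (S.card : ℝ)) *
          ∑ j ∈ S, ((1 + lam) • (1 : Matrix (Fin n) (Fin n) ℝ) - Aᵀ)⁻¹ j i := by
  have hd : d ≠ 0 := ne_of_gt hd0
  set M : Matrix (Fin n) (Fin n) ℝ := 1 - d • A with hM
  -- strict column diagonal dominance
  have hMdet : M.det ≠ 0 := by
    apply det_ne_zero_of_sum_col_lt_diag
    intro k
    have hAkk : A k k ≤ 1 := by
      rw [← hcolsum k]
      exact Finset.single_le_sum (fun i _ => hA i k) (Finset.mem_univ k)
    have hdiag : M k k = 1 - d * A k k := by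
      simp [hM, Matrix.one_apply, Matrix.sub_apply]
    have hoff : ∀ i ∈ Finset.univ.erase k, ‖M i k‖ = d * A i k := by
      intro i hi
      have hik : i ≠ k := (Finset.mem_erase.mp hi).1
      have : M i k = -(d * A i k) := by
        simp [hM, Matrix.one_apply, Matrix.sub_apply, hik]
      rw [this, norm_neg, Real.norm_eq_abs, abs_of_nonneg (mul_nonneg hd0.le (hA i k))]
    rw [Finset.sum_congr rfl hoff, hdiag]
    have hsum : ∑ i ∈ Finset.univ.erase k, d * A i k = d * (1 - A k k) := by
      rw [← Finset.mul_sum, Finset.sum_erase_eq_sub (Finset.mem_univ k), hcolsum k]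
    rw [hsum, Real.norm_eq_abs, abs_of_pos]
    · nlinarith [hA k k]
    · nlinarith [hA k k]
  have hMunit : IsUnit M := (Matrix.isUnit_iff_isUnit_det M).mpr (isUnit_iff_ne_zero.mpr hMdet)
  have hlam1 : 1 + lam = d⁻¹ := by
    rw [hlam]; field_simp; ring
  -- B = d⁻¹ • Mᵀ
  have hB : (1 + lam) • (1 : Matrix (Fin n) (Fin n) ℝ) - Aᵀ = d⁻¹ • Mᵀ := by
    rw [hlam1, hM]
    ext i j
    simp [Matrix.sub_apply, Matrix.smul_apply, Matrix.transpose_apply, Matrix.one_apply,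
      mul_sub, inv_mul_cancel_left₀ hd]
  have hMtdet : IsUnit Mᵀ.det := by
    rw [Matrix.det_transpose]; exact isUnit_iff_ne_zero.mpr hMdet
  have hBunit : IsUnit ((1 + lam) • (1 : Matrix (Fin n) (Fin n) ℝ) - Aᵀ) := by
    rw [hB]
    rw [Matrix.isUnit_iff_isUnit_det, Matrix.det_smul]
    exact (IsUnit.pow _ (isUnit_iff_ne_zero.mpr (inv_ne_zero hd))).mul hMtdet
  refine ⟨hMunit, hBunit, ?_⟩
  -- inverse computation
  have hBinv : ((1 + lam) • (1 : Matrix (Fin n) (Fin n) ℝ) - Aᵀ)⁻¹ = d • (M⁻¹)ᵀ := by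
    rw [hB]
    have : Invertible (d⁻¹ : ℝ) := invertibleOfNonzero (inv_ne_zero hd)
    rw [Mᵀ.inv_smul d⁻¹ hMtdet, Matrix.transpose_nonsing_inv]
    congr 1
    simp [invOf_eq_inv, hd]
  intro x hx i
  set c : ℝ := (1 - d) / (S.card : ℝ) with hc
  set e : Fin n → ℝ := fun i => if i ∈ S then (1 : ℝ) else 0 with he
  have hMx : M.mulVec x = c • e := by
    rw [hM, Matrix.sub_mulVec, Matrix.one_mulVec, Matrix.smul_mulVec]
    nth_rewrite 1 [hx]
    abel
  have hxeq : x = M⁻¹.mulVec (c • e) := by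
    rw [← hMx, Matrix.mulVec_mulVec, Matrix.nonsing_inv_mul M (isUnit_iff_ne_zero.mpr hMdet),
      Matrix.one_mulVec]
  have hxi : x i = c * ∑ j ∈ S, M⁻¹ i j := by
    rw [hxeq]
    simp only [Matrix.mulVec, dotProduct, Pi.smul_apply, he, smul_eq_mul]
    have hterm : ∀ j, M⁻¹ i j * (c * (if j ∈ S then (1:ℝ) else 0))
        = if j ∈ S then c * M⁻¹ i j else 0 := by
      intro j; split <;> ring
    simp_rw [hterm]
    rw [Finset.sum_ite_mem, Finset.univ_inter, ← Finset.mul_sum]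
  have hS0 : (S.card : ℝ) ≠ 0 := by
    exact Nat.cast_ne_zero.mpr (Finset.card_ne_zero.mpr hS)
  rw [hBinv]
  simp only [Matrix.smul_apply, Matrix.transpose_apply, smul_eq_mul]
  rw [← Finset.mul_sum, hxi, hc, hlam]
  field_simp
end

section
/- Theorem 4 (submodularity of influence spread via the live-edge representation): let V be a finite set, let H range over all binary relations (directed graphs) on V, and let w(H) ≥ 0 be nonnegative weights. Define σ(S) = Σ_H w(H) · |reach_H(S)|, where reach_H(S) is the set of vertices v such that (s,v) lies in the reflexive-transitive closure of H for some s ∈ S. Then σ is submodular: for all seed sets S ⊆ T ⊆ V and any node s ∈ V, σ(S ∪ {s}) − σ(S) ≥ σ(T ∪ {s}) − σ(T). -/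
open BigOperators

/-- The number of vertices reachable from the set `S` through the
reflexive-transitive closure of the (live-edge) graph `H`. -/
noncomputable def reachCountH {V : Type*} (H : Finset (V × V)) (S : Set V) : ℕ :=
  Set.ncard {v : V | ∃ s ∈ S, Relation.ReflTransGen (fun a b => (a, b) ∈ H) s v}

/-- The influence spread `σ(S) = ∑_H w(H) · |reach_H(S)|`, a nonnegative weighted sum
over all directed graphs `H` on `V` of the number of vertices reachable from `S`. -/
noncomputable def influenceSpread (V : Type*) [Fintype V] [DecidableEq V]
    (w : Finset (V × V) → ℝ) (S : Set V) : ℝ :=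
  ∑ H : Finset (V × V), w H * (reachCountH H S : ℝ)


/-- Reach set. -/
def reachSet {V : Type*} (H : Finset (V × V)) (S : Set V) : Set V :=
  {v : V | ∃ s ∈ S, Relation.ReflTransGen (fun a b => (a, b) ∈ H) s v}

lemma reachSet_union {V : Type*} (H : Finset (V × V)) (S T : Set V) :
    reachSet H (S ∪ T) = reachSet H S ∪ reachSet H T := by
  ext v
  simp only [reachSet, Set.mem_setOf_eq, Set.mem_union]
  constructor
  · rintro ⟨a, (ha | ha), h⟩
    · exact Or.inl ⟨a, ha, h⟩
    · exact Or.inr ⟨a, ha, h⟩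
  · rintro (⟨a, ha, h⟩ | ⟨a, ha, h⟩)
    · exact ⟨a, Or.inl ha, h⟩
    · exact ⟨a, Or.inr ha, h⟩

lemma reachSet_mono {V : Type*} (H : Finset (V × V)) {S T : Set V} (hST : S ⊆ T) :
    reachSet H S ⊆ reachSet H T := by
  rintro v ⟨a, ha, h⟩
  exact ⟨a, hST ha, h⟩

lemma key_card {V : Type*} [Fintype V] {A B C : Set V} (hBA : B ⊆ A) :
    (A ∪ C).ncard + B.ncard ≤ (B ∪ C).ncard + A.ncard := by
  have hu : ∀ X : Set V, (X ∪ C).ncard = X.ncard + (C \ X).ncard := by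
    intro X
    rw [← Set.ncard_union_eq (Set.disjoint_sdiff_right) (Set.toFinite _) (Set.toFinite _)]
    congr 1
    rw [Set.union_diff_self]
  rw [hu A, hu B]
  have : (C \ A).ncard ≤ (C \ B).ncard :=
    Set.ncard_le_ncard (Set.diff_subset_diff_right hBA) (Set.toFinite _)
  omega

/-- Theorem 4: any nonnegative weighted combination of live-edge
reachability counts is a submodular function of the seed set. -/
theorem influenceSpread_submodular (V : Type*) [Fintype V] [DecidableEq V]
    (w : Finset (V × V) → ℝ) (hw : ∀ H, 0 ≤ w H) :
    ∀ S T : Set V, S ⊆ T → ∀ s : V,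
      influenceSpread V w (T ∪ {s}) - influenceSpread V w T ≤
        influenceSpread V w (S ∪ {s}) - influenceSpread V w S := by
  intro S T hST s
  have key : ∀ H : Finset (V × V),
      reachCountH H (T ∪ {s}) + reachCountH H S ≤
        reachCountH H (S ∪ {s}) + reachCountH H T := by
    intro H
    have hR : ∀ X : Set V, reachCountH H X = (reachSet H X).ncard := fun _ => rfl
    rw [hR, hR, hR, hR, reachSet_union, reachSet_union]
    exact key_card (reachSet_mono H hST)
  have hsum : influenceSpread V w (T ∪ {s}) + influenceSpread V w S ≤
      influenceSpread V w (S ∪ {s}) + influenceSpread V w T := by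
    unfold influenceSpread
    rw [← Finset.sum_add_distrib, ← Finset.sum_add_distrib]
    apply Finset.sum_le_sum
    intro H _
    rw [← mul_add, ← mul_add]
    apply mul_le_mul_of_nonneg_left _ (hw H)
    exact_mod_cast key H
  linarith
end
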